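/- Let ξ ∈ ℝ and let z be a nonzero complex number with z⁴ − z² + 1 ≠ 0. Write u = Re(z − 1/z) and v = Im(z − 1/z). Then (u² + v²)² + 2(u² − v²) + 1 = |z² − 1 + z⁻²|² > 0, and the imaginary part of the phase function satisfies Im θ_ξ(z) = √3 · v · ( ξ + (u² + v² − 1) / ((u² + v²)² + 2(u² − v²) + 1) ). -/

import Mathlib

noncomputable def phaseθ (ξ : ℝ) (z : ℂ) : ℂ :=
  (Real.sqrt 3 : ℂ) * (z - 1 / z) * ((ξ : ℂ) - 1 / (z ^ 2 - 1 + (1 / z) ^ 2))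

/-- With `u = Re(z − 1/z)` and `v = Im(z − 1/z)`, one has
`(u²+v²)² + 2(u²−v²) + 1 = |z² − 1 + z⁻²|² > 0` and
`Im θ_ξ(z) = √3 v (ξ + (u²+v²−1)/((u²+v²)² + 2(u²−v²) + 1))`. -/
theorem stmt_3 (ξ : ℝ) (z : ℂ) (hz : z ≠ 0) (hz4 : z ^ 4 - z ^ 2 + 1 ≠ 0) :
    let u : ℝ := (z - 1 / z).re
    let v : ℝ := (z - 1 / z).im
    (u ^ 2 + v ^ 2) ^ 2 + 2 * (u ^ 2 - v ^ 2) + 1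
        = ‖z ^ 2 - 1 + (1 / z) ^ 2‖ ^ 2 ∧
    0 < (u ^ 2 + v ^ 2) ^ 2 + 2 * (u ^ 2 - v ^ 2) + 1 ∧
    (phaseθ ξ z).im
        = Real.sqrt 3 * v *
            (ξ + (u ^ 2 + v ^ 2 - 1) / ((u ^ 2 + v ^ 2) ^ 2 + 2 * (u ^ 2 - v ^ 2) + 1)) := by
  intro u v
  set w : ℂ := z - 1 / z with hw
  have hwc : z ^ 2 - 1 + (1 / z) ^ 2 = w ^ 2 + 1 := by
    field_simp [hw]
    rw [hw]
    field_simp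
    ring
  have hcne : w ^ 2 + 1 ≠ 0 := by
    rw [← hwc]
    intro h
    apply hz4
    have := mul_eq_zero_of_left h (z ^ 2)
    field_simp at this
    linear_combination this
  have hwu : w.re = u := rfl
  have hwv : w.im = v := rfl
  have hD : (u ^ 2 + v ^ 2) ^ 2 + 2 * (u ^ 2 - v ^ 2) + 1 = Complex.normSq (w ^ 2 + 1) := by
    simp [Complex.normSq_apply, Complex.add_re, Complex.add_im, pow_two, Complex.mul_re,
      Complex.mul_im, hwu, hwv]
    ring
  have hDpos : 0 < (u ^ 2 + v ^ 2) ^ 2 + 2 * (u ^ 2 - v ^ 2) + 1 := by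
    rw [hD]; exact Complex.normSq_pos.mpr hcne
  refine ⟨by rw [hD, hwc, Complex.sq_norm], hDpos, ?_⟩
  have hkey : (phaseθ ξ z).im = Real.sqrt 3 * (ξ * v - (v * (1 - (u^2+v^2))) / Complex.normSq (w ^ 2 + 1)) := by
    rw [phaseθ, hwc, ← hw]
    simp [Complex.mul_im, Complex.sub_im, Complex.sub_re, Complex.div_im, Complex.div_re,
      Complex.ofReal_re, Complex.ofReal_im, Complex.add_re, Complex.add_im, pow_two,
      Complex.mul_re, hwu, hwv]
    have hns : Complex.normSq (w * w + 1) ≠ 0 := by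
      have := Complex.normSq_pos.mpr hcne
      rw [pow_two] at this; exact ne_of_gt this
    field_simp
    ring
  rw [hkey, ← hD]
  have hD0 : (u ^ 2 + v ^ 2) ^ 2 + 2 * (u ^ 2 - v ^ 2) + 1 ≠ 0 := ne_of_gt hDpos
  field_simp
  ring
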